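/- arXiv:2101.06078 — 2 statements merged into one kernel-verified Lean document; each statement's English description precedes it below -/
import Mathlib

section
/- Let A be a nonempty finite subset of ℝ^n and let M = sup_{a ∈ A} ‖a‖ (Euclidean norm). Let σ_1,...,σ_n be independent Rademacher random variables (taking values ±1 with probability 1/2 each). Then E_σ[ sup_{a ∈ A} (1/n) Σ_{i=1}^n σ_i a_i ] ≤ M √(2 log |A|) / n. -/
/-!
Chernoff's method. For `λ > 0`, Jensen's inequality for `exp`, the bound of a maximum of
exponentials by their sum, and the sub-Gaussian estimate `cosh x ≤ exp (x² / 2)` applied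
coordinatewise give `exp (λ 𝔼 sup_a ⟪σ, a⟫) ≤ |A| exp (λ² M² / 2)`, i.e.
`𝔼 sup_a ⟪σ, a⟫ ≤ log |A| / λ + λ M² / 2`; the choice `λ = √(2 log |A|) / M` gives
`M √(2 log |A|)`, and dividing by `n` gives the claim.
-/

/-- Rademacher sign associated to a Boolean coin flip. -/
noncomputable def radSign (b : Bool) : ℝ := if b then 1 else -1

open Real Finset Filter Topology

lemma sum_bool_exp_radSign_mul (x : ℝ) : ∑ b : Bool, exp (radSign b * x) = 2 * cosh x := by
  simp only [Fintype.sum_bool, radSign, cosh_eq, ite_true, Bool.false_eq_true, ite_false,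
    one_mul, neg_one_mul]
  ring

lemma exp_sup'_le_sum_exp {α : Type*} (s : Finset α) (hs : s.Nonempty) (f : α → ℝ) :
    exp (s.sup' hs f) ≤ ∑ a ∈ s, exp (f a) := by
  obtain ⟨a, ha, hsup⟩ := exists_mem_eq_sup' hs f
  rw [hsup]
  exact single_le_sum (fun b _ => (exp_pos (f b)).le) ha

lemma exp_sum_div_card_le {α : Type*} [Fintype α] [Nonempty α] (f : α → ℝ) :
    exp ((∑ a, f a) / Fintype.card α) ≤ (∑ a, exp (f a)) / Fintype.card α := by
  have hcard : (0 : ℝ) < Fintype.card α := by exact_mod_cast Fintype.card_pos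
  simpa [div_eq_inv_mul, mul_sum, hcard.ne'] using
    convexOn_exp.map_sum_le (t := univ) (w := fun _ => (Fintype.card α : ℝ)⁻¹) (p := f)
      (fun _ _ => by positivity) (by simp [hcard.ne']) (fun _ _ => Set.mem_univ _)

section Rademacher

variable {ι : Type*} [Fintype ι] [DecidableEq ι]

lemma sum_exp_radSign_eq_prod_cosh (x : ι → ℝ) :
    ∑ σ : ι → Bool, exp (∑ i, radSign (σ i) * x i) = ∏ i, 2 * cosh (x i) := by
  simp only [exp_sum, ← sum_bool_exp_radSign_mul, Fintype.prod_sum]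

lemma sum_exp_radSign_div_le (x : EuclideanSpace ℝ ι) :
    (∑ σ : ι → Bool, exp (∑ i, radSign (σ i) * x i)) / 2 ^ Fintype.card ι
      ≤ exp (‖x‖ ^ 2 / 2) := by
  rw [sum_exp_radSign_eq_prod_cosh, div_le_iff₀ (by positivity), prod_mul_distrib, prod_const,
    card_univ, EuclideanSpace.real_norm_sq_eq, sum_div, exp_sum, mul_comm]
  gcongr with i
  exact cosh_le_exp_half_sq _

theorem rademacher_sup_average_le (A : Finset (EuclideanSpace ℝ ι)) (hA : A.Nonempty) {M : ℝ}
    (hM : ∀ a ∈ A, ‖a‖ ≤ M) {l : ℝ} (hl : 0 < l) :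
    (∑ σ : ι → Bool, A.sup' hA (fun a => ∑ i, radSign (σ i) * a i)) / 2 ^ Fintype.card ι
      ≤ log A.card / l + l * M ^ 2 / 2 := by
  set S := fun σ : ι → Bool => A.sup' hA (fun a => ∑ i, radSign (σ i) * a i)
  set N : ℝ := 2 ^ Fintype.card ι
  have hexp :
      exp (l * ((∑ σ, S σ) / N)) ≤ exp (log A.card + l ^ 2 * M ^ 2 / 2) :=
    calc exp (l * ((∑ σ, S σ) / N))
        ≤ (∑ σ, exp (l * S σ)) / N := by
          simpa [N, ← mul_sum, mul_div_assoc] using exp_sum_div_card_le (fun σ => l * S σ)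
      _ ≤ (∑ σ : ι → Bool, ∑ a ∈ A, exp (∑ i, radSign (σ i) * (l • a) i)) / N := by
          gcongr with σ
          rw [mul₀_sup' hl.le]
          refine (exp_sup'_le_sum_exp _ _ _).trans_eq ?_
          simp [mul_sum, mul_left_comm]
      _ = ∑ a ∈ A, (∑ σ : ι → Bool, exp (∑ i, radSign (σ i) * (l • a) i)) / N := by
          rw [sum_comm, sum_div]
      _ ≤ ∑ a ∈ A, exp ((l * M) ^ 2 / 2) := by
          gcongr with a ha
          refine (sum_exp_radSign_div_le _).trans ?_
          rw [norm_smul, norm_of_nonneg hl.le]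
          gcongr
          exact hM a ha
      _ = exp (log A.card + l ^ 2 * M ^ 2 / 2) := by
          rw [sum_const, exp_add, exp_log (by exact_mod_cast hA.card_pos), nsmul_eq_mul]
          ring_nf
  rw [exp_le_exp] at hexp
  rw [div_add' _ _ _ hl.ne', le_div_iff₀ hl]
  linarith

end Rademacher

lemma le_mul_sqrt_of_forall_le_div_add_mul {X L M : ℝ} (hL : 0 ≤ L) (hM : 0 ≤ M)
    (h : ∀ l > 0, X ≤ L / l + l * M ^ 2 / 2) : X ≤ M * √(2 * L) := by
  -- `l = √(2L) / M` is optimal; perturbing `L` and `M` by `ε` keeps it defined when `L M = 0`.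
  have hε : ∀ ε > 0, X ≤ (M + ε) * √(2 * (L + ε)) := by
    intro ε hε
    set s := √(2 * (L + ε))
    have hs : 0 < s := by positivity
    have hs2 : s ^ 2 = 2 * (L + ε) := sq_sqrt (by positivity)
    calc X ≤ L / (s / (M + ε)) + s / (M + ε) * M ^ 2 / 2 := h _ (by positivity)
      _ ≤ (L + ε) / (s / (M + ε)) + s / (M + ε) * (M + ε) ^ 2 / 2 := by gcongr <;> linarith
      _ = (M + ε) * s := by
          field_simp
          linear_combination -hs2
  have hcont : Continuous fun ε => (M + ε) * √(2 * (L + ε)) := by fun_prop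
  have hlim :
      Tendsto (fun ε => (M + ε) * √(2 * (L + ε))) (𝓝[>] 0) (𝓝 (M * √(2 * L))) :=
    tendsto_nhdsWithin_of_tendsto_nhds (by simpa using hcont.tendsto 0)
  exact ge_of_tendsto hlim (eventually_nhdsWithin_of_forall hε)

theorem massart_finite_lemma_general (n : ℕ)
    (A : Finset (EuclideanSpace ℝ (Fin n))) (hA : A.Nonempty)
    (M : ℝ) (hM : M = A.sup' hA (fun a => ‖a‖)) :
    (∑ σ : Fin n → Bool,
        A.sup' hA (fun a => (1 / (n : ℝ)) * ∑ i, radSign (σ i) * a i)) / 2 ^ n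
      ≤ M * Real.sqrt (2 * Real.log (A.card)) / n := by
  have hMa : ∀ a ∈ A, ‖a‖ ≤ M := fun a ha => hM ▸ le_sup' (fun a => ‖a‖) ha
  have hM0 : 0 ≤ M := (norm_nonneg _).trans (hMa _ hA.choose_spec)
  have hlog : 0 ≤ log A.card := log_nonneg (by exact_mod_cast hA.card_pos)
  have hbound := le_mul_sqrt_of_forall_le_div_add_mul hlog hM0
    fun l hl => by simpa only [Fintype.card_fin] using rademacher_sup_average_le A hA hMa hl
  simp_rw [← mul₀_sup' (by positivity : (0 : ℝ) ≤ 1 / n), ← mul_sum]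
  rw [mul_div_assoc, one_div_mul_eq_div]
  exact div_le_div_of_nonneg_right hbound n.cast_nonneg

/-- **Massart's finite lemma.** For a nonempty finite set `A ⊆ ℝ^n` with
`M = sup_{a ∈ A} ‖a‖` (Euclidean norm), the expectation over independent
Rademacher signs `σ` of `sup_{a ∈ A} (1/n) Σ_i σ_i a_i` is at most
`M √(2 log |A|) / n`. -/
theorem massart_finite_lemma (n : ℕ) (hn : 0 < n)
    (A : Finset (EuclideanSpace ℝ (Fin n))) (hA : A.Nonempty)
    (M : ℝ) (hM : M = A.sup' hA (fun a => ‖a‖)) :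
    (∑ σ : Fin n → Bool,
        A.sup' hA (fun a => (1 / (n : ℝ)) * ∑ i, radSign (σ i) * a i)) / 2 ^ n
      ≤ M * Real.sqrt (2 * Real.log (A.card)) / n :=
  massart_finite_lemma_general n A hA M hM
end

section
/- Let (Δ_m) be a sequence of nonnegative reals satisfying Δ_{m+1} ≤ (1 − h_m/(s_m + c)) Δ_m + ε̄_m for all m ≥ 0, where c ≥ 0, h_m ≥ 0, s_m = s_0 + Σ_{i=0}^{m−1} h_i with s_0 ≥ 0, and ε̄_m ≥ 0. Then for all m ≥ 1, Δ_m ≤ ((s_0 + c)/(s_m + c)) Δ_0 + Σ_{j=1}^{m} ((s_j + c)/(s_m + c)) ε̄_{j−1}. -/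
/-!
Multiplying the recursion by the weight `s (m + 1) + c = (s m + c) + h m` gives
`(s (m + 1) + c) Δ (m + 1) ≤ (s m + c) Δ m + (s (m + 1) + c) ε̄ m`, because
`(S + h) (1 - h / S) = S - h² / S ≤ S`. The weighted quantities `(s m + c) Δ m` therefore
telescope, and dividing by `s m + c` gives the bound.
-/

open Finset

theorem le_add_sum_range_of_le_add {α : Type*} [AddCommGroup α] [PartialOrder α]
    [IsOrderedAddMonoid α] {u v : ℕ → α} (h : ∀ n, u (n + 1) ≤ u n + v n) (m : ℕ) :
    u m ≤ u 0 + ∑ i ∈ range m, v i := by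
  rw [← sub_le_iff_le_add', ← sum_range_sub]
  exact sum_le_sum fun i _ => sub_le_iff_le_add'.2 (h i)

theorem sum_Icc_one_eq_sum_range {M : Type*} [AddCommMonoid M] (f : ℕ → M) (m : ℕ) :
    ∑ j ∈ Icc 1 m, f j = ∑ i ∈ range m, f (i + 1) := by
  rw [range_eq_Ico, sum_Ico_add' f 0 m 1]
  rfl

theorem add_mul_le_of_le_one_sub_div_mul_add {S t x y e : ℝ} (hS : 0 < S) (ht : 0 ≤ t)
    (hx : 0 ≤ x) (hy : y ≤ (1 - t / S) * x + e) :
    (S + t) * y ≤ S * x + (S + t) * e := by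
  have hweight : (S + t) * (1 - t / S) ≤ S := by
    have : (S + t) * (1 - t / S) = S - t ^ 2 / S := by field_simp; ring
    linarith [div_nonneg (sq_nonneg t) hS.le]
  calc (S + t) * y ≤ (S + t) * ((1 - t / S) * x + e) := by gcongr
    _ = (S + t) * (1 - t / S) * x + (S + t) * e := by ring
    _ ≤ S * x + (S + t) * e := by gcongr

theorem recursion_unrolled_bound_general (Δ h ebar : ℕ → ℝ) (s : ℕ → ℝ) (s₀ c : ℝ)
    (hpos : 0 < s₀ + c)
    (hs : ∀ m, s m = s₀ + ∑ i ∈ Finset.range m, h i)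
    (hΔ : ∀ m, 0 ≤ Δ m) (hh : ∀ m, 0 ≤ h m)
    (hrec : ∀ m, Δ (m + 1) ≤ (1 - h m / (s m + c)) * Δ m + ebar m) :
    ∀ m : ℕ, 1 ≤ m →
      Δ m ≤ ((s 0 + c) / (s m + c)) * Δ 0
        + ∑ j ∈ Finset.Icc 1 m, ((s j + c) / (s m + c)) * ebar (j - 1) := by
  intro m _
  have hweight_pos : ∀ n, 0 < s n + c := fun n => by
    rw [hs]; linarith [sum_nonneg fun i (_ : i ∈ range n) => hh i]
  have hsucc : ∀ n, s (n + 1) + c = (s n + c) + h n := fun n => by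
    rw [hs, hs, sum_range_succ]; ring
  have hstep : ∀ n, (s (n + 1) + c) * Δ (n + 1) ≤
      (s n + c) * Δ n + (s (n + 1) + c) * ebar n := fun n => by
    rw [hsucc]
    exact add_mul_le_of_le_one_sub_div_mul_add (hweight_pos n) (hh n) (hΔ n) (hrec n)
  have htelescoped := le_add_sum_range_of_le_add (u := fun n => (s n + c) * Δ n)
    (v := fun n => (s (n + 1) + c) * ebar n) hstep m
  calc Δ m = (s m + c) * Δ m / (s m + c) := (mul_div_cancel_left₀ _ (hweight_pos m).ne').symm
    _ ≤ ((s 0 + c) * Δ 0 + ∑ i ∈ range m, (s (i + 1) + c) * ebar i) / (s m + c) :=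
      div_le_div_of_nonneg_right htelescoped (hweight_pos m).le
    _ = _ := by
      rw [add_div, sum_div, sum_Icc_one_eq_sum_range]
      simp only [Nat.add_sub_cancel, mul_div_right_comm]

/-- Lemma A2 (unrolled one-step recursion, following Zhang and Yu, 2005):
if `Δ_{m+1} ≤ (1 − h_m/(s_m + c)) Δ_m + ε̄_m` with `s_m = s_0 + Σ_{i<m} h_i`,
then `Δ_m ≤ ((s_0+c)/(s_m+c)) Δ_0 + Σ_{j=1}^m ((s_j+c)/(s_m+c)) ε̄_{j−1}`
for all `m ≥ 1`. -/
theorem recursion_unrolled_bound (Δ h ebar : ℕ → ℝ) (s : ℕ → ℝ) (s₀ c : ℝ)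
    (hs₀ : 0 ≤ s₀) (hc : 0 ≤ c) (hpos : 0 < s₀ + c)
    (hs : ∀ m, s m = s₀ + ∑ i ∈ Finset.range m, h i)
    (hΔ : ∀ m, 0 ≤ Δ m) (hh : ∀ m, 0 ≤ h m) (he : ∀ m, 0 ≤ ebar m)
    (hrec : ∀ m, Δ (m + 1) ≤ (1 - h m / (s m + c)) * Δ m + ebar m) :
    ∀ m : ℕ, 1 ≤ m →
      Δ m ≤ ((s 0 + c) / (s m + c)) * Δ 0
        + ∑ j ∈ Finset.Icc 1 m, ((s j + c) / (s m + c)) * ebar (j - 1) :=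
  recursion_unrolled_bound_general Δ h ebar s s₀ c hpos hs hΔ hh hrec
end
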